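/- Let k be a field with char(k) ≠ 2,3 and let F = X³ + AXZ² + BZ³ - Y²Z with A ≠ 0 and Δ = -16(4A³+27B²) ≠ 0. Then the j-invariant of the Hessian curve of F satisfies j(Hess(F)) = (6912 - j(F))³ / (27·j(F)²), where j(F) = -1728·(4A)³/Δ. -/

import Mathlib

/-!
Write `D = 4A³ + 27B²` and `t = A³ / D`, so that `j(F) = 6912 t`. The Hessian coefficients are
`A' = (A³ - D) / (9A⁴)` and `B' = -B(A³ + 6B²) / (3A⁶)`, and its discriminant collapses to
`4A'³ + 27B'² = -D / (27A⁶)`. Hence `j(Hess F) = 6912 (1 - t)³ / (27 t²)`, which is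
`(6912 - j)³ / (27 j²)` evaluated at `j = 6912 t`.
-/

namespace ShortWeierstrass

variable {K : Type*} [Field K]

/-- The j-invariant `c₄³ / Δ` of `y² = x³ + Ax + B`, where `c₄ = -48A`. -/
def jInvariant (A B : K) : K :=
  (-1728) * (4 * A) ^ 3 / ((-16) * (4 * A ^ 3 + 27 * B ^ 2))

def hessianA (A B : K) : K := -(A ^ 3 / 3 + 3 * B ^ 2) / A ^ 4

def hessianB (A B : K) : K := -(A ^ 3 * B / 3 + 2 * B ^ 3) / A ^ 6

variable {A B : K}

theorem jInvariant_eq (h2 : (2 : K) ≠ 0) :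
    jInvariant A B = 6912 * (A ^ 3 / (4 * A ^ 3 + 27 * B ^ 2)) := by
  have h16 : (-16 : K) ≠ 0 := by
    rw [show (-16 : K) = -2 ^ 4 by norm_num]; exact neg_ne_zero.mpr (pow_ne_zero 4 h2)
  rw [jInvariant, mul_div_assoc', show (-1728 : K) * (4 * A) ^ 3 = -16 * (6912 * A ^ 3) by ring,
    mul_div_mul_left _ _ h16]

theorem hessianA_eq (h3 : (3 : K) ≠ 0) (hA : A ≠ 0) :
    hessianA A B = (A ^ 3 - (4 * A ^ 3 + 27 * B ^ 2)) / (9 * A ^ 4) := by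
  have h9 : (9 : K) ≠ 0 := by rw [show (9 : K) = 3 ^ 2 by norm_num]; exact pow_ne_zero 2 h3
  rw [hessianA]
  field_simp
  ring

theorem hessian_discr_eq (h3 : (3 : K) ≠ 0) (hA : A ≠ 0) :
    4 * hessianA A B ^ 3 + 27 * hessianB A B ^ 2 = -(4 * A ^ 3 + 27 * B ^ 2) / (27 * A ^ 6) := by
  have h27 : (27 : K) ≠ 0 := by rw [show (27 : K) = 3 ^ 3 by norm_num]; exact pow_ne_zero 3 h3
  rw [hessianA, hessianB]
  field_simp
  ring

theorem jInvariant_hessian (h2 : (2 : K) ≠ 0) (h3 : (3 : K) ≠ 0) (hA : A ≠ 0)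
    (hΔ : 4 * A ^ 3 + 27 * B ^ 2 ≠ 0) :
    jInvariant (hessianA A B) (hessianB A B) =
      6912 * (1 - A ^ 3 / (4 * A ^ 3 + 27 * B ^ 2)) ^ 3 /
        (27 * (A ^ 3 / (4 * A ^ 3 + 27 * B ^ 2)) ^ 2) := by
  have h9 : (9 : K) ≠ 0 := by rw [show (9 : K) = 3 ^ 2 by norm_num]; exact pow_ne_zero 2 h3
  have h27 : (27 : K) ≠ 0 := by rw [show (27 : K) = 3 ^ 3 by norm_num]; exact pow_ne_zero 3 h3
  rw [jInvariant_eq h2, hessian_discr_eq h3 hA, hessianA_eq h3 hA]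
  generalize 4 * A ^ 3 + 27 * B ^ 2 = D at hΔ ⊢
  field_simp
  ring

end ShortWeierstrass

open ShortWeierstrass in
theorem hessian_j_invariant {K : Type*} [Field K]
    (h2 : (2 : K) ≠ 0) (h3 : (3 : K) ≠ 0) (A B : K) (hA : A ≠ 0)
    (hΔ : 4 * A ^ 3 + 27 * B ^ 2 ≠ 0) :
    (-1728) * (4 * (-(A ^ 3 / 3 + 3 * B ^ 2) / A ^ 4)) ^ 3 /
        ((-16) * (4 * (-(A ^ 3 / 3 + 3 * B ^ 2) / A ^ 4) ^ 3 +
          27 * (-(A ^ 3 * B / 3 + 2 * B ^ 3) / A ^ 6) ^ 2)) =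
      (6912 - (-1728) * (4 * A) ^ 3 / ((-16) * (4 * A ^ 3 + 27 * B ^ 2))) ^ 3 /
        (27 * ((-1728) * (4 * A) ^ 3 / ((-16) * (4 * A ^ 3 + 27 * B ^ 2))) ^ 2) := by
  show jInvariant (hessianA A B) (hessianB A B) =
    (6912 - jInvariant A B) ^ 3 / (27 * jInvariant A B ^ 2)
  have h6912 : (6912 : K) ≠ 0 := by
    rw [show (6912 : K) = 2 ^ 8 * 3 ^ 3 by norm_num]
    exact mul_ne_zero (pow_ne_zero 8 h2) (pow_ne_zero 3 h3)
  have ht : A ^ 3 / (4 * A ^ 3 + 27 * B ^ 2) ≠ 0 := div_ne_zero (pow_ne_zero 3 hA) hΔ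
  rw [jInvariant_hessian h2 h3 hA hΔ, jInvariant_eq h2]
  field_simp
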